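/- arXiv:math/0503172 — 2 statements merged into one kernel-verified Lean document; each statement's English description precedes it below -/
import Mathlib

section
/- For f ∈ C¹(ℤ_p, ℂ_p) and 0 ≤ a < p^n, the quantity μ_{f,q}(a + p^n ℤ_p) := ∫_{a+p^nℤ_p} q^{-(x-a)} f(x) dμ_q(x) satisfies μ_{f,q}(a+p^n ℤ_p) = (1/[p^n]_q) ∫_{ℤ_p} q^{-p^n x} f(a + p^n x) dμ_{q^{p^n}}(x), where the right-hand integral is the q^{p^n}-Volkenborn integral. -/
open Filter Finset Topology

variable {p : ℕ} [hp : Fact p.Prime] {K : Type*} [NontriviallyNormedField K]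

/-- The `q`-analogue `[n]_q = (1 - q^n)/(1 - q)` of a natural number `n`. -/
noncomputable def qNum (q : K) (n : ℕ) : K := (1 - q ^ n) / (1 - q)

/-- `f : ℤ_p → K` is a `C¹` (strictly differentiable) function: the difference quotient
`Δ₁f(m,x) = (f(x+m) - f(x))/m` extends to a continuous function of `(m, x)`. Here
`ι : ℤ_p →+* K` is the (isometric) embedding of `ℤ_p` into `K`. -/
def IsC1 (ι : PadicInt p →+* K) (f : PadicInt p → K) : Prop :=
  ∃ Df : PadicInt p × PadicInt p → K, Continuous Df ∧
    ∀ m x : PadicInt p, m ≠ 0 → Df (m, x) * ι m = f (x + m) - f x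

/-- A `K`-valued distribution on `ℤ_p`: `μ x n` is the value on the ball `x + pⁿℤ_p`;
it depends only on the ball and is finitely additive under splitting a ball of level `n`
into the `p` balls of level `n+1`. -/
def IsDist (μ : PadicInt p → ℕ → K) : Prop :=
  (∀ (x y : PadicInt p) (n : ℕ), ‖x - y‖ ≤ (p : ℝ) ^ (-(n : ℤ)) → μ x n = μ y n) ∧
  ∀ (x : PadicInt p) (n : ℕ),
    μ x n = ∑ i ∈ range p, μ (x + (i : PadicInt p) * (p : PadicInt p) ^ n) (n + 1)

lemma na_natCast_le_one (hna : IsNonarchimedean (‖·‖ : K → ℝ)) (k : ℕ) : ‖(k : K)‖ ≤ 1 := by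
  induction k with
  | zero => simp
  | succ m ih =>
      push_cast
      exact le_trans (hna _ _) (by simp [ih])

lemma na_sum_le (hna : IsNonarchimedean (‖·‖ : K → ℝ)) {ι : Type*} (s : Finset ι) (g : ι → K)
    (B : ℝ) (hB : 0 ≤ B) (h : ∀ i ∈ s, ‖g i‖ ≤ B) : ‖∑ i ∈ s, g i‖ ≤ B := by
  classical
  induction s using Finset.induction with
  | empty => simpa
  | insert _ _ hx ih =>
      rw [Finset.sum_insert hx]
      exact le_trans (hna _ _) (max_le (h _ (Finset.mem_insert_self _ _))
        (ih fun i hi => h i (Finset.mem_insert_of_mem hi)))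

lemma na_norm_sub_eq (hna : IsNonarchimedean (‖·‖ : K → ℝ)) {a b : K} (h : ‖b‖ < ‖a‖) :
    ‖a - b‖ = ‖a‖ := by
  refine le_antisymm ?_ ?_
  · have hb : ‖-b‖ ≤ ‖a‖ := by simpa using h.le
    have := (hna a (-b)).trans (max_le le_rfl hb)
    simpa [sub_eq_add_neg] using this
  · have h2 : ‖a‖ ≤ max ‖a - b‖ ‖b‖ := by
      have := hna (a - b) b
      simpa using this
    rcases max_cases ‖a - b‖ ‖b‖ with ⟨he, _⟩ | ⟨he, _⟩
    · rwa [he] at h2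
    · rw [he] at h2; exact absurd h2 (not_le.mpr h)

lemma step_pow_p (hna : IsNonarchimedean (‖·‖ : K → ℝ)) (hpK : ‖(p : K)‖ = (p : ℝ)⁻¹)
    (s : K) (hs : ‖1 - s‖ < (p : ℝ) ^ (-1 / ((p : ℝ) - 1))) (hs1 : s ≠ 1) :
    s ^ p ≠ 1 ∧ ‖1 - s ^ p‖ < (p : ℝ) ^ (-1 / ((p : ℝ) - 1)) := by
  have hp2 : 2 ≤ p := hp.out.two_le
  have hpR : (1 : ℝ) < p := by exact_mod_cast hp.out.one_lt
  have hc1 : (p : ℝ) ^ (-1 / ((p : ℝ) - 1)) < 1 := by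
    apply Real.rpow_lt_one_of_one_lt_of_neg hpR
    apply div_neg_of_neg_of_pos (by norm_num) (by linarith)
  set t : K := 1 - s with htdef
  have ht0 : t ≠ 0 := sub_ne_zero.mpr (Ne.symm hs1)
  have htpos : 0 < ‖t‖ := norm_pos_iff.mpr ht0
  have ht1 : ‖t‖ < 1 := lt_trans hs hc1
  have hcp : ((p : ℝ) ^ (-1 / ((p : ℝ) - 1))) ^ (p - 1) = (p : ℝ)⁻¹ := by
    rw [← Real.rpow_natCast ((p : ℝ) ^ (-1 / ((p : ℝ) - 1))) (p - 1),
      ← Real.rpow_mul (by positivity)]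
    have : ((p - 1 : ℕ) : ℝ) = (p : ℝ) - 1 := by
      push_cast [Nat.cast_sub (by omega : 1 ≤ p)]; ring
    rw [this, div_mul_cancel₀ _ (by linarith : (p : ℝ) - 1 ≠ 0), Real.rpow_neg_one]
  have htp : ‖t‖ ^ (p - 1) < (p : ℝ)⁻¹ := by
    calc ‖t‖ ^ (p - 1) < ((p : ℝ) ^ (-1 / ((p : ℝ) - 1))) ^ (p - 1) :=
          pow_lt_pow_left₀ hs (norm_nonneg _) (by omega)
      _ = (p : ℝ)⁻¹ := hcp
  -- binomial expansion
  have hsum : s ^ p = ∑ k ∈ range (p + 1), (-t) ^ k * (p.choose k : K) := by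
    have hse : s = -t + 1 := by rw [htdef]; ring
    rw [hse, add_pow]
    simp
  have hp1 : p - 1 + 1 = p := Nat.succ_pred_eq_of_pos hp.out.pos
  set E : K := ∑ i ∈ range (p - 1), (-t) ^ (i + 1 + 1) * (p.choose (i + 1 + 1) : K) with hEdef
  have hkey : 1 - s ^ p = (p : K) * t - E := by
    rw [hsum, Finset.sum_range_succ', ← hp1, Finset.sum_range_succ']
    simp only [pow_zero, one_mul, Nat.choose_zero_right, Nat.cast_one, mul_one, pow_one,
      Nat.choose_one_right, zero_add, hp1]
    rw [← hEdef]
    ring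
  set B : ℝ := max ((p : ℝ)⁻¹ * ‖t‖ ^ 2) (‖t‖ ^ p) with hBdef
  have hE : ‖E‖ ≤ B := by
    apply na_sum_le hna _ _ _ (le_trans (by positivity) (le_max_right _ _))
    intro i hi
    rw [Finset.mem_range] at hi
    have hnorm : ‖(-t) ^ (i + 1 + 1) * (p.choose (i + 1 + 1) : K)‖
        = ‖t‖ ^ (i + 1 + 1) * ‖((p.choose (i + 1 + 1) : ℕ) : K)‖ := by
      rw [norm_mul, norm_pow, norm_neg]
    rcases eq_or_lt_of_le (by omega : i + 1 + 1 ≤ p) with he | hlt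
    · rw [hnorm, he]
      simp only [Nat.choose_self, Nat.cast_one, norm_one, mul_one]
      exact le_max_right _ _
    · refine le_trans ?_ (le_max_left _ _)
      obtain ⟨m, hm⟩ := hp.out.dvd_choose_self (by omega) hlt
      have hCle : ‖((p.choose (i + 1 + 1) : ℕ) : K)‖ ≤ (p : ℝ)⁻¹ := by
        rw [hm]
        push_cast
        rw [norm_mul, hpK]
        calc (p : ℝ)⁻¹ * ‖(m : K)‖ ≤ (p : ℝ)⁻¹ * 1 :=
              mul_le_mul_of_nonneg_left (na_natCast_le_one hna m) (by positivity)
          _ = (p : ℝ)⁻¹ := mul_one _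
      rw [hnorm]
      have htle : ‖t‖ ^ (i + 1 + 1) ≤ ‖t‖ ^ 2 :=
        pow_le_pow_of_le_one (norm_nonneg _) ht1.le (by omega)
      calc ‖t‖ ^ (i + 1 + 1) * ‖((p.choose (i + 1 + 1) : ℕ) : K)‖
          ≤ ‖t‖ ^ 2 * (p : ℝ)⁻¹ :=
            mul_le_mul htle hCle (norm_nonneg _) (by positivity)
        _ = (p : ℝ)⁻¹ * ‖t‖ ^ 2 := mul_comm _ _
  have hBlt : B < (p : ℝ)⁻¹ * ‖t‖ := by
    apply max_lt
    · apply mul_lt_mul_of_pos_left _ (by positivity)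
      nlinarith
    · have : ‖t‖ ^ p = ‖t‖ ^ (p - 1) * ‖t‖ := by
        rw [← pow_succ, hp1]
      rw [this]
      exact mul_lt_mul_of_pos_right htp htpos
  have hpt : ‖(p : K) * t‖ = (p : ℝ)⁻¹ * ‖t‖ := by rw [norm_mul, hpK]
  have hfinal : ‖1 - s ^ p‖ = (p : ℝ)⁻¹ * ‖t‖ := by
    rw [hkey, na_norm_sub_eq hna (by rw [hpt]; exact lt_of_le_of_lt hE hBlt), hpt]
  constructor
  · intro hcon
    rw [hcon, sub_self, norm_zero] at hfinal
    have : (0 : ℝ) < (p : ℝ)⁻¹ * ‖t‖ := by positivity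
    linarith
  · rw [hfinal]
    calc (p : ℝ)⁻¹ * ‖t‖ ≤ 1 * ‖t‖ :=
          mul_le_mul_of_nonneg_right (by rw [inv_le_one_iff₀]; right; linarith) (norm_nonneg _)
      _ = ‖t‖ := one_mul _
      _ < _ := hs

lemma pow_pow_ne_one (hna : IsNonarchimedean (‖·‖ : K → ℝ)) (hpK : ‖(p : K)‖ = (p : ℝ)⁻¹)
    (q : K) (hq : ‖1 - q‖ < (p : ℝ) ^ (-1 / ((p : ℝ) - 1))) (hq1 : q ≠ 1) (n : ℕ) :
    q ^ p ^ n ≠ 1 ∧ ‖1 - q ^ p ^ n‖ < (p : ℝ) ^ (-1 / ((p : ℝ) - 1)) := by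
  induction n with
  | zero => simpa using ⟨hq1, hq⟩
  | succ m ih =>
      have h := step_pow_p hna hpK (q ^ p ^ m) ih.2 ih.1
      rw [← pow_mul, ← pow_succ] at h
      exact h

/-- for C¹ `f` and `0 ≤ a < p^n`,
`μ_{f,q}(a + p^n ℤ_p) = (1/[p^n]_q) ∫_{ℤ_p} q^{-p^n x} f(a + p^n x) dμ_{q^{p^n}}(x)`,
both sides given by their defining Riemann sums. -/
theorem mu_fq_restriction_formula
(q : K) (hna : IsNonarchimedean (‖·‖ : K → ℝ)) (hpK : ‖(p : K)‖ = (p : ℝ)⁻¹)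
    (hq : ‖1 - q‖ < (p : ℝ) ^ (-1 / ((p : ℝ) - 1))) (hq1 : q ≠ 1)
    (ι : PadicInt p →+* K) (hι : ∀ z, ‖ι z‖ = ‖z‖)
    (f : PadicInt p → K) (hf : IsC1 ι f)
    (a n : ℕ) (ha : a < p ^ n) (L I : K)
    (hL : Tendsto (fun m => (qNum q (p ^ (m + n)))⁻¹ *
        ∑ x ∈ range (p ^ m), f ((a : PadicInt p) + (p : PadicInt p) ^ n * (x : PadicInt p)))
      atTop (𝓝 L))
    (hI : Tendsto (fun m => (qNum (q ^ p ^ n) (p ^ m))⁻¹ *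
        ∑ x ∈ range (p ^ m), ((q ^ p ^ n)⁻¹) ^ x *
          f ((a : PadicInt p) + (p : PadicInt p) ^ n * (x : PadicInt p)) * (q ^ p ^ n) ^ x)
      atTop (𝓝 I)) :
    L = (qNum q (p ^ n))⁻¹ * I := by
  have hpR : (1 : ℝ) < p := by exact_mod_cast hp.out.one_lt
  have hc1 : (p : ℝ) ^ (-1 / ((p : ℝ) - 1)) < 1 := by
    apply Real.rpow_lt_one_of_one_lt_of_neg hpR
    apply div_neg_of_neg_of_pos (by norm_num) (by linarith)
  have hq0 : q ≠ 0 := by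
    intro h
    rw [h] at hq
    simp at hq
    linarith
  have hA1 : q ^ p ^ n ≠ 1 := (pow_pow_ne_one hna hpK q hq hq1 n).1
  have hA0 : q ^ p ^ n ≠ 0 := pow_ne_zero _ hq0
  -- simplify the integrand of hI
  have hI' : Tendsto (fun m => (qNum (q ^ p ^ n) (p ^ m))⁻¹ *
      ∑ x ∈ range (p ^ m), f ((a : PadicInt p) + (p : PadicInt p) ^ n * (x : PadicInt p)))
      atTop (𝓝 I) := by
    apply Tendsto.congr _ hI
    intro m
    congr 1
    apply Finset.sum_congr rfl
    intro x _
    rw [inv_pow]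
    field_simp
  -- factor the q-number
  have hfac : ∀ m : ℕ, (qNum q (p ^ (m + n)))⁻¹
      = (qNum q (p ^ n))⁻¹ * (qNum (q ^ p ^ n) (p ^ m))⁻¹ := by
    intro m
    rw [← mul_inv]
    congr 1
    unfold qNum
    have h1 : (1 : K) - q ≠ 0 := sub_ne_zero.mpr (Ne.symm hq1)
    have h2 : (1 : K) - q ^ p ^ n ≠ 0 := sub_ne_zero.mpr (Ne.symm hA1)
    have h3 : q ^ p ^ (m + n) = (q ^ p ^ n) ^ p ^ m := by
      rw [← pow_mul, ← pow_add, add_comm]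
    rw [h3]
    field_simp
  have hL' : Tendsto (fun m => (qNum q (p ^ n))⁻¹ * ((qNum (q ^ p ^ n) (p ^ m))⁻¹ *
      ∑ x ∈ range (p ^ m), f ((a : PadicInt p) + (p : PadicInt p) ^ n * (x : PadicInt p))))
      atTop (𝓝 L) := by
    apply Tendsto.congr _ hL
    intro m
    rw [hfac m, mul_assoc]
  exact tendsto_nhds_unique hL' (hI'.const_mul _)
end

section
/- For P(x) = [x]_q^k and 0 ≤ a < p^n, one has the exact expansion [p^n]_q μ_{P,q}(a + p^n ℤ_p) = Σ_{i=0}^{k} (P^{(i)}(a)/i!) β_{i, q^{p^n}} [p^n]_q^i q^{ai}, where P^{(i)} denotes the i-th derivative with respect to [x]_q (so (P^{(i)}(a)/i!) = C(k,i)[a]_q^{k-i}), and β_{i,q^{p^n}} are the q^{p^n}-Bernoulli numbers. -/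
open Filter Finset Topology

variable {p : ℕ} [hp : Fact p.Prime] {K : Type*} [NontriviallyNormedField K]

lemma na_nat (hna : IsNonarchimedean (‖·‖ : K → ℝ)) (m : ℕ) : ‖(m : K)‖ ≤ 1 := by
  induction m with
  | zero => simp
  | succ n ih =>
    push_cast
    have := hna (n : K) 1
    simp only at this
    refine le_trans this ?_
    simp [ih]

lemma na_sum_lt (hna : IsNonarchimedean (‖·‖ : K → ℝ)) {s : Finset ℕ} {f : ℕ → K} {b : ℝ}
    (hb : 0 < b) (h : ∀ i ∈ s, ‖f i‖ < b) : ‖∑ i ∈ s, f i‖ < b := by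
  induction s using Finset.induction with
  | empty => simpa using hb
  | @insert a s hx ih =>
    rw [Finset.sum_insert hx]
    have := hna (f a) (∑ i ∈ s, f i)
    simp only at this
    refine lt_of_le_of_lt this ?_
    exact max_lt (h a (mem_insert_self a s)) (ih fun i hi => h i (mem_insert_of_mem hi))

lemma na_add_eq (hna : IsNonarchimedean (‖·‖ : K → ℝ)) {x y : K} (h : ‖y‖ < ‖x‖) :
    ‖x + y‖ = ‖x‖ := by
  have h1 := hna x y
  have h2 := hna (x + y) (-y)
  simp only [norm_neg] at h1 h2
  refine le_antisymm (le_trans h1 (by simpa using h.le)) ?_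
  have hxy : x = x + y + -y := by ring
  rcases max_cases ‖x + y‖ ‖y‖ with ⟨he, _⟩ | ⟨he, hlt⟩
  · calc ‖x‖ = ‖x + y + -y‖ := by rw [← hxy]
    _ ≤ _ := le_trans h2 (le_of_eq he)
  · exfalso
    have hxle : ‖x‖ ≤ ‖y‖ := by
      calc ‖x‖ = ‖x + y + -y‖ := by rw [← hxy]
      _ ≤ _ := le_trans h2 (le_of_eq he)
    exact absurd (lt_of_le_of_lt hxle h) (lt_irrefl _)

lemma key_step (p : ℕ) (hp : p.Prime) (q : K) (hna : IsNonarchimedean (‖·‖ : K → ℝ))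
    (hpK : ‖(p : K)‖ = (p : ℝ)⁻¹)
    (hqlt : ‖1 - q‖ < (p : ℝ) ^ (-1 / ((p : ℝ) - 1))) (hq1 : q ≠ 1) :
    ‖1 - q ^ p‖ = (p : ℝ)⁻¹ * ‖1 - q‖ := by
  have hp2 := hp.two_le
  have hp0 : (0:ℝ) < p := by positivity
  have hp1 : (1:ℝ) < p := by exact_mod_cast hp2.trans_lt' one_lt_two
  set c : ℝ := (p : ℝ) ^ (-1 / ((p : ℝ) - 1)) with hc
  have hc1 : c < 1 := by
    apply Real.rpow_lt_one_of_one_lt_of_neg hp1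
    have : (0:ℝ) < (p:ℝ) - 1 := by linarith
    rw [neg_div]
    exact neg_neg_of_pos (div_pos one_pos this)
  set t : K := q - 1 with ht
  have ht0 : t ≠ 0 := sub_ne_zero.mpr hq1
  have htn : ‖1 - q‖ = ‖t‖ := by rw [ht, norm_sub_rev]
  rw [htn] at hqlt
  have htpos : 0 < ‖t‖ := norm_pos_iff.mpr ht0
  have ht1 : ‖t‖ < 1 := hqlt.trans hc1
  have hcp : c ^ (p - 1) = (p : ℝ)⁻¹ := by
    rw [hc, ← Real.rpow_natCast ((p:ℝ) ^ (-1 / ((p:ℝ) - 1))) (p-1),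
      ← Real.rpow_mul hp0.le]
    have hcast : ((p - 1 : ℕ) : ℝ) = (p : ℝ) - 1 := by
      push_cast [Nat.cast_sub (by omega : 1 ≤ p)]; ring
    rw [hcast, div_mul_cancel₀, Real.rpow_neg_one]
    intro h; linarith [h]
  obtain ⟨m, hm⟩ : ∃ m, p = m + 2 := ⟨p - 2, by omega⟩
  have expand : q ^ p - 1 =
      t * (p : K) + ∑ j ∈ range (m + 1), t ^ (j + 2) * (p.choose (j + 2) : K) := by
    have hq' : q = t + 1 := by rw [ht]; ring
    rw [hq', add_pow]
    simp only [one_pow, mul_one]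
    rw [hm]
    rw [Finset.sum_range_succ' (fun j => t ^ j * (((m+2).choose j : ℕ) : K)) (m + 2)]
    rw [Finset.sum_range_succ' (fun j => t ^ (j+1) * (((m+2).choose (j+1) : ℕ) : K)) (m + 1)]
    simp only [pow_zero, Nat.choose_zero_right, Nat.cast_one, one_mul, pow_one,
      Nat.choose_one_right, zero_add, Nat.zero_add, show ∀ x : ℕ, x + 1 + 1 = x + 2 from fun _ => rfl]
    push_cast
    ring
  have hbound : ∀ j ∈ range (m + 1),
      ‖t ^ (j + 2) * (p.choose (j + 2) : K)‖ < (p:ℝ)⁻¹ * ‖t‖ := by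
    intro j hj
    rw [mem_range] at hj
    rcases eq_or_lt_of_le (by omega : j + 2 ≤ p) with hjp | hjp
    · -- j + 2 = p, choose = 1
      rw [hjp, Nat.choose_self]
      simp only [Nat.cast_one, mul_one, norm_pow]
      calc ‖t‖ ^ p = ‖t‖ ^ (p - 1) * ‖t‖ := by
            rw [← pow_succ]; congr 1; omega
        _ < c ^ (p - 1) * ‖t‖ := by
            apply mul_lt_mul_of_pos_right _ htpos
            exact pow_lt_pow_left₀ hqlt (norm_nonneg t) (by omega)
        _ = (p:ℝ)⁻¹ * ‖t‖ := by rw [hcp]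
    · -- j + 2 < p : p ∣ choose
      obtain ⟨d, hd⟩ := hp.dvd_choose_self (by omega) hjp
      rw [norm_mul, norm_pow, hd]
      push_cast
      rw [norm_mul, hpK]
      have hnd : ‖(d : K)‖ ≤ 1 := na_nat hna d
      calc ‖t‖ ^ (j + 2) * ((p:ℝ)⁻¹ * ‖(d:K)‖)
          ≤ ‖t‖ ^ (j + 2) * ((p:ℝ)⁻¹ * 1) := by
            apply mul_le_mul_of_nonneg_left _ (by positivity)
            apply mul_le_mul_of_nonneg_left hnd (by positivity)
        _ = (p:ℝ)⁻¹ * ‖t‖ ^ (j + 2) := by ring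
        _ < (p:ℝ)⁻¹ * ‖t‖ := by
            apply mul_lt_mul_of_pos_left _ (by positivity)
            calc ‖t‖ ^ (j + 2) ≤ ‖t‖ ^ 2 := by
                  apply pow_le_pow_of_le_one (norm_nonneg t) ht1.le; omega
              _ < ‖t‖ := by nlinarith
  have hS : ‖∑ j ∈ range (m + 1), t ^ (j + 2) * (p.choose (j + 2) : K)‖ < ‖t * (p : K)‖ := by
    rw [norm_mul, hpK, mul_comm]
    exact na_sum_lt hna (by positivity) hbound
  have : ‖1 - q ^ p‖ = ‖q ^ p - 1‖ := norm_sub_rev _ _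
  rw [this, expand, na_add_eq hna hS, norm_mul, hpK, htn]
  ring

lemma not_root (p : ℕ) (hp : p.Prime) (q : K) (hna : IsNonarchimedean (‖·‖ : K → ℝ))
    (hpK : ‖(p : K)‖ = (p : ℝ)⁻¹)
    (hqlt : ‖1 - q‖ < (p : ℝ) ^ (-1 / ((p : ℝ) - 1))) (hq1 : q ≠ 1) (r : ℕ) :
    q ^ p ^ r ≠ 1 := by
  have hp0 : (0:ℝ) < p := by exact_mod_cast hp.pos
  have hinv1 : (p:ℝ)⁻¹ ≤ 1 := by
    rw [inv_le_one_iff₀]; right; exact_mod_cast hp.one_lt.le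
  suffices h : ∀ r : ℕ, q ^ p ^ r ≠ 1 ∧ ‖1 - q ^ p ^ r‖ ≤ ‖1 - q‖ from (h r).1
  intro r
  induction r with
  | zero => exact ⟨by simpa using hq1, by simp⟩
  | succ r ih =>
    obtain ⟨h1, h2⟩ := ih
    have hlt : ‖1 - q ^ p ^ r‖ < (p : ℝ) ^ (-1 / ((p : ℝ) - 1)) := lt_of_le_of_lt h2 hqlt
    have hkey := key_step p hp (q ^ p ^ r) hna hpK hlt h1
    have hpow : (q ^ p ^ r) ^ p = q ^ p ^ (r + 1) := by
      rw [← pow_mul, ← pow_succ]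
    rw [hpow] at hkey
    constructor
    · intro hcon
      rw [hcon] at hkey
      simp only [sub_self, norm_zero] at hkey
      have : 0 < ‖1 - q ^ p ^ r‖ := norm_pos_iff.mpr (sub_ne_zero.mpr (Ne.symm h1))
      nlinarith [inv_pos.mpr hp0]
    · rw [hkey]
      calc (p:ℝ)⁻¹ * ‖1 - q ^ p ^ r‖ ≤ 1 * ‖1 - q ^ p ^ r‖ :=
            mul_le_mul_of_nonneg_right hinv1 (norm_nonneg _)
        _ = ‖1 - q ^ p ^ r‖ := one_mul _
        _ ≤ ‖1 - q‖ := h2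

/-- for `P(x) = [x]_q^k` and `0 ≤ a < p^n`,
`[p^n]_q μ_{P,q}(a+p^nℤ_p) = ∑_{i=0}^k C(k,i)[a]_q^{k-i} β_{i,q^{p^n}} [p^n]_q^i q^{ai}`. -/
theorem mu_Pq_exact_expansion
(q : K) (hna : IsNonarchimedean (‖·‖ : K → ℝ)) (hpK : ‖(p : K)‖ = (p : ℝ)⁻¹)
    (hq : ‖1 - q‖ < (p : ℝ) ^ (-1 / ((p : ℝ) - 1))) (hq1 : q ≠ 1)
    (k a n : ℕ) (ha : a < p ^ n) (μP : K)
    (hμP : Tendsto (fun m => (qNum q (p ^ (m + n)))⁻¹ *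
        ∑ i ∈ range (p ^ m), (qNum q (a + i * p ^ n)) ^ k) atTop (𝓝 μP))
    (β : ℕ → K)
    (hβ : ∀ j, Tendsto (fun m => (qNum (q ^ p ^ n) (p ^ m))⁻¹ *
        ∑ i ∈ range (p ^ m), (qNum (q ^ p ^ n) i) ^ j) atTop (𝓝 (β j))) :
    qNum q (p ^ n) * μP =
      ∑ i ∈ range (k + 1),
        (k.choose i : K) * (qNum q a) ^ (k - i) * β i * (qNum q (p ^ n)) ^ i * q ^ (a * i) := by
  have hroot := not_root p hp.out q hna hpK hq hq1
  set Q : K := q ^ p ^ n with hQ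
  have h1q : (1 : K) - q ≠ 0 := sub_ne_zero.mpr (Ne.symm hq1)
  have h1Q : (1 : K) - Q ≠ 0 := sub_ne_zero.mpr (Ne.symm (hroot n))
  have hQpm : ∀ m : ℕ, (1 : K) - Q ^ p ^ m ≠ 0 := by
    intro m
    have hQm : Q ^ p ^ m = q ^ p ^ (n + m) := by rw [hQ, ← pow_mul, ← pow_add]
    rw [hQm]
    exact sub_ne_zero.mpr (Ne.symm (hroot (n + m)))
  have hpn0 : qNum q (p ^ n) ≠ 0 := by
    unfold qNum
    exact div_ne_zero h1Q h1q
  have hQm0 : ∀ m : ℕ, qNum Q (p ^ m) ≠ 0 := by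
    intro m
    unfold qNum
    exact div_ne_zero (hQpm m) h1Q
  set D : ℕ → K := fun j =>
    (k.choose j : K) * (qNum q a) ^ (k - j) * (qNum q (p ^ n)) ^ j * q ^ (a * j) with hD
  have key : ∀ m : ℕ,
      qNum q (p ^ n) * ((qNum q (p ^ (m + n)))⁻¹ *
        ∑ i ∈ range (p ^ m), (qNum q (a + i * p ^ n)) ^ k)
      = ∑ j ∈ range (k + 1), D j *
          ((qNum Q (p ^ m))⁻¹ * ∑ i ∈ range (p ^ m), (qNum Q i) ^ j) := by
    intro m
    have hsplit : qNum q (p ^ (m + n)) = qNum q (p ^ n) * qNum Q (p ^ m) := by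
      unfold qNum
      rw [show p ^ (m + n) = p ^ n * p ^ m by rw [pow_add]; ring, pow_mul, ← hQ]
      field_simp
    have hterm : ∀ i : ℕ,
        qNum q (a + i * p ^ n) = q ^ a * qNum q (p ^ n) * qNum Q i + qNum q a := by
      intro i
      unfold qNum
      rw [pow_add, show q ^ (i * p ^ n) = Q ^ i by rw [hQ, ← pow_mul, mul_comm], ← hQ]
      field_simp
      ring
    have hsum : ∑ i ∈ range (p ^ m), (qNum q (a + i * p ^ n)) ^ k
        = ∑ j ∈ range (k + 1), D j * ∑ i ∈ range (p ^ m), (qNum Q i) ^ j := by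
      calc ∑ i ∈ range (p ^ m), (qNum q (a + i * p ^ n)) ^ k
          = ∑ i ∈ range (p ^ m), ∑ j ∈ range (k + 1),
              (q ^ a * qNum q (p ^ n) * qNum Q i) ^ j * (qNum q a) ^ (k - j) *
                (k.choose j : K) := by
            refine sum_congr rfl fun i _ => ?_
            rw [hterm i, add_pow]
        _ = _ := by
            rw [Finset.sum_comm]
            refine sum_congr rfl fun j _ => ?_
            rw [Finset.mul_sum]
            refine sum_congr rfl fun i _ => ?_
            rw [hD]
            simp only []
            rw [pow_mul]
            ring
    rw [hsum, hsplit, mul_inv, Finset.mul_sum, Finset.mul_sum]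
    refine sum_congr rfl fun j _ => ?_
    field_simp
  have T1 := hμP.const_mul (qNum q (p ^ n))
  have T2 : Tendsto (fun m => ∑ j ∈ range (k + 1), D j *
      ((qNum Q (p ^ m))⁻¹ * ∑ i ∈ range (p ^ m), (qNum Q i) ^ j)) atTop
      (𝓝 (∑ j ∈ range (k + 1), D j * β j)) :=
    tendsto_finset_sum _ fun j _ => (hβ j).const_mul (D j)
  have heq : (fun m => qNum q (p ^ n) * ((qNum q (p ^ (m + n)))⁻¹ *
      ∑ i ∈ range (p ^ m), (qNum q (a + i * p ^ n)) ^ k))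
      = fun m => ∑ j ∈ range (k + 1), D j *
          ((qNum Q (p ^ m))⁻¹ * ∑ i ∈ range (p ^ m), (qNum Q i) ^ j) := funext key
  rw [heq] at T1
  rw [tendsto_nhds_unique T1 T2]
  refine sum_congr rfl fun j _ => ?_
  rw [hD]
  ring
end
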